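/- arXiv:2202.06742 — 2 statements merged into one kernel-verified Lean document; each statement's English description precedes it below -/
import Mathlib

section
/- Let x be a spherically symmetric random vector in ℝ^d (d ≥ 2) with finite fourth moments, let u ∈ ℝ^d, and let ε be a real random variable independent of x with mean zero. Set y = ⟨u,x⟩ + ε. Then E[y² x xᵀ] = κ u uᵀ + (Var(ε) + γ ‖u‖²) I_d, where γ = E[⟨x,e₁⟩² ⟨x,e₂⟩²] and κ = E[⟨x,e₁⟩⁴] − γ. -/
/-! Reflecting `v` onto `w` shows that `⟪v, x⟫` and `⟪w, x⟫` have the same law whenever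
`‖v‖ = ‖w‖`, so `E⟪v, x⟫ⁿ = ‖v‖ⁿ mₙ`, where `mₙ` is the `n`-th moment of one coordinate.
Polarization then determines all mixed moments of orders two and four:
`E[⟪a, x⟫⟪b, x⟫] = m₂⟪a, b⟫` and `E[⟪u, x⟫²⟪a, x⟫⟪b, x⟫] = m₄/3 · (‖u‖²⟪a, b⟫ + 2⟪u, a⟫⟪u, b⟫)`.
In particular `γ = m₄/3` and `κ = 2γ`. The noise contributes `E[ε²] E[x xᵀ]` only, since the
cross term factors through `E ε = 0` by independence. -/

open MeasureTheory ProbabilityTheory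
open scoped RealInnerProductSpace

section SphericalSymmetry

variable {Ω E : Type*} [MeasurableSpace Ω] {μ : Measure Ω}
  [NormedAddCommGroup E] [InnerProductSpace ℝ E] [MeasurableSpace E] [BorelSpace E]
  {X : Ω → E}

theorem integrable_inner_mul_inner (hX : AEMeasurable X μ)
    (hX2 : Integrable (fun ω => ‖X ω‖ ^ 2) μ) (a b : E) :
    Integrable (fun ω => ⟪a, X ω⟫ * ⟪b, X ω⟫) μ := by
  have hcont : Continuous fun v : E => ⟪a, v⟫ * ⟪b, v⟫ := by fun_prop
  refine (hX2.const_mul (‖a‖ * ‖b‖)).mono'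
    (hcont.measurable.comp_aemeasurable hX).aestronglyMeasurable (ae_of_all _ fun ω => ?_)
  calc ‖⟪a, X ω⟫ * ⟪b, X ω⟫‖ = ‖⟪a, X ω⟫‖ * ‖⟪b, X ω⟫‖ := norm_mul _ _
    _ ≤ (‖a‖ * ‖X ω‖) * (‖b‖ * ‖X ω‖) := by gcongr <;> exact norm_inner_le_norm _ _
    _ = ‖a‖ * ‖b‖ * ‖X ω‖ ^ 2 := by ring

theorem integrable_inner_mul_inner_mul_inner_mul_inner (hX : AEMeasurable X μ)
    (hX4 : Integrable (fun ω => ‖X ω‖ ^ 4) μ) (a b c d : E) :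
    Integrable (fun ω => ⟪a, X ω⟫ * ⟪b, X ω⟫ * ⟪c, X ω⟫ * ⟪d, X ω⟫) μ := by
  have hcont : Continuous fun v : E => ⟪a, v⟫ * ⟪b, v⟫ * ⟪c, v⟫ * ⟪d, v⟫ := by fun_prop
  refine (hX4.const_mul (‖a‖ * ‖b‖ * ‖c‖ * ‖d‖)).mono'
    (hcont.measurable.comp_aemeasurable hX).aestronglyMeasurable (ae_of_all _ fun ω => ?_)
  calc ‖⟪a, X ω⟫ * ⟪b, X ω⟫ * ⟪c, X ω⟫ * ⟪d, X ω⟫‖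
        = ‖⟪a, X ω⟫‖ * ‖⟪b, X ω⟫‖ * ‖⟪c, X ω⟫‖ * ‖⟪d, X ω⟫‖ := by simp only [norm_mul]
    _ ≤ (‖a‖ * ‖X ω‖) * (‖b‖ * ‖X ω‖) * (‖c‖ * ‖X ω‖) * (‖d‖ * ‖X ω‖) := by
        gcongr <;> exact norm_inner_le_norm _ _
    _ = ‖a‖ * ‖b‖ * ‖c‖ * ‖d‖ * ‖X ω‖ ^ 4 := by ring

theorem identDistrib_inner_of_norm_eq (hX : AEMeasurable X μ)
    (hsym : ∀ Q : E ≃ₗᵢ[ℝ] E, μ.map (fun ω => Q (X ω)) = μ.map X) {v w : E} (hvw : ‖v‖ = ‖w‖) :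
    IdentDistrib (fun ω => ⟪v, X ω⟫) (fun ω => ⟪w, X ω⟫) μ μ := by
  set R : E ≃ₗᵢ[ℝ] E := (ℝ ∙ (v - w))ᗮ.reflection
  have hRX : IdentDistrib (fun ω => R (X ω)) X μ μ :=
    ⟨R.continuous.measurable.comp_aemeasurable hX, hX, hsym R⟩
  have hvR : (fun ω => ⟪v, X ω⟫) = fun ω => ⟪w, R (X ω)⟫ :=
    funext fun ω => by rw [← Submodule.reflection_sub hvw, R.inner_map_map]
  rw [hvR]
  exact hRX.comp (continuous_const.inner continuous_id).measurable

theorem integral_inner_pow_eq (hX : AEMeasurable X μ)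
    (hsym : ∀ Q : E ≃ₗᵢ[ℝ] E, μ.map (fun ω => Q (X ω)) = μ.map X) {e : E} (he : ‖e‖ = 1)
    (v : E) (n : ℕ) :
    ∫ ω, ⟪v, X ω⟫ ^ n ∂μ = ‖v‖ ^ n * ∫ ω, ⟪e, X ω⟫ ^ n ∂μ := by
  have hv : ‖v‖ = ‖‖v‖ • e‖ := by simp [norm_smul, he]
  have h :=
    ((identDistrib_inner_of_norm_eq hX hsym hv).comp (measurable_id.pow_const n)).integral_eq
  simp only [Function.comp_apply, id, real_inner_smul_left, mul_pow] at h
  rw [h, integral_const_mul]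

theorem integral_inner_mul_inner (hX : AEMeasurable X μ)
    (hsym : ∀ Q : E ≃ₗᵢ[ℝ] E, μ.map (fun ω => Q (X ω)) = μ.map X)
    (hX2 : Integrable (fun ω => ‖X ω‖ ^ 2) μ) {e : E} (he : ‖e‖ = 1) (a b : E) :
    ∫ ω, ⟪a, X ω⟫ * ⟪b, X ω⟫ ∂μ = ⟪a, b⟫ * ∫ ω, ⟪e, X ω⟫ ^ 2 ∂μ := by
  have hsq (c : E) : Integrable (fun ω => ⟪c, X ω⟫ ^ 2) μ :=
    (integrable_inner_mul_inner hX hX2 c c).congr (ae_of_all _ fun ω => by ring)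
  calc ∫ ω, ⟪a, X ω⟫ * ⟪b, X ω⟫ ∂μ
      = ∫ ω, (⟪a + b, X ω⟫ ^ 2 - ⟪a - b, X ω⟫ ^ 2) / 4 ∂μ := by
        simp only [inner_add_left, inner_sub_left]
        ring_nf
    _ = (‖a + b‖ ^ 2 - ‖a - b‖ ^ 2) / 4 * ∫ ω, ⟪e, X ω⟫ ^ 2 ∂μ := by
        rw [integral_div, integral_sub (hsq _) (hsq _), integral_inner_pow_eq hX hsym he (a + b),
          integral_inner_pow_eq hX hsym he (a - b)]
        ring
    _ = ⟪a, b⟫ * ∫ ω, ⟪e, X ω⟫ ^ 2 ∂μ := by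
        rw [norm_add_sq_real, norm_sub_sq_real]
        ring

theorem integral_inner_sq_mul_inner_sq (hX : AEMeasurable X μ)
    (hsym : ∀ Q : E ≃ₗᵢ[ℝ] E, μ.map (fun ω => Q (X ω)) = μ.map X)
    (hX4 : Integrable (fun ω => ‖X ω‖ ^ 4) μ) {e : E} (he : ‖e‖ = 1) (u w : E) :
    ∫ ω, ⟪u, X ω⟫ ^ 2 * ⟪w, X ω⟫ ^ 2 ∂μ
      = (‖u‖ ^ 2 * ‖w‖ ^ 2 + 2 * ⟪u, w⟫ ^ 2) * (∫ ω, ⟪e, X ω⟫ ^ 4 ∂μ) / 3 := by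
  have hpow (c : E) : Integrable (fun ω => ⟪c, X ω⟫ ^ 4) μ :=
    (integrable_inner_mul_inner_mul_inner_mul_inner hX hX4 c c c c).congr
      (ae_of_all _ fun ω => by ring)
  calc ∫ ω, ⟪u, X ω⟫ ^ 2 * ⟪w, X ω⟫ ^ 2 ∂μ
      = ∫ ω, (⟪u + w, X ω⟫ ^ 4 + ⟪u - w, X ω⟫ ^ 4
          - 2 * ⟪u, X ω⟫ ^ 4 - 2 * ⟪w, X ω⟫ ^ 4) / 12 ∂μ := by
        simp only [inner_add_left, inner_sub_left]
        ring_nf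
    _ = (‖u + w‖ ^ 4 + ‖u - w‖ ^ 4 - 2 * ‖u‖ ^ 4 - 2 * ‖w‖ ^ 4) / 12
          * ∫ ω, ⟪e, X ω⟫ ^ 4 ∂μ := by
        rw [integral_div, integral_sub (by fun_prop) (by fun_prop),
          integral_sub (by fun_prop) (by fun_prop), integral_add (hpow _) (hpow _),
          integral_const_mul, integral_const_mul, integral_inner_pow_eq hX hsym he (u + w),
          integral_inner_pow_eq hX hsym he (u - w), integral_inner_pow_eq hX hsym he u,
          integral_inner_pow_eq hX hsym he w]
        ring
    _ = _ := by
        simp only [show ∀ c : E, ‖c‖ ^ 4 = (‖c‖ ^ 2) ^ 2 from fun c => by ring]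
        rw [norm_add_sq_real, norm_sub_sq_real]
        ring

theorem integral_inner_sq_mul_inner_mul_inner (hX : AEMeasurable X μ)
    (hsym : ∀ Q : E ≃ₗᵢ[ℝ] E, μ.map (fun ω => Q (X ω)) = μ.map X)
    (hX4 : Integrable (fun ω => ‖X ω‖ ^ 4) μ) {e : E} (he : ‖e‖ = 1) (u a b : E) :
    ∫ ω, ⟪u, X ω⟫ ^ 2 * (⟪a, X ω⟫ * ⟪b, X ω⟫) ∂μ
      = (‖u‖ ^ 2 * ⟪a, b⟫ + 2 * ⟪u, a⟫ * ⟪u, b⟫) * (∫ ω, ⟪e, X ω⟫ ^ 4 ∂μ) / 3 := by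
  have hint (c : E) : Integrable (fun ω => ⟪u, X ω⟫ ^ 2 * ⟪c, X ω⟫ ^ 2) μ :=
    (integrable_inner_mul_inner_mul_inner_mul_inner hX hX4 u u c c).congr
      (ae_of_all _ fun ω => by ring)
  calc ∫ ω, ⟪u, X ω⟫ ^ 2 * (⟪a, X ω⟫ * ⟪b, X ω⟫) ∂μ
      = ∫ ω, (⟪u, X ω⟫ ^ 2 * ⟪a + b, X ω⟫ ^ 2 - ⟪u, X ω⟫ ^ 2 * ⟪a - b, X ω⟫ ^ 2) / 4 ∂μ := by
        simp only [inner_add_left, inner_sub_left]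
        ring_nf
    _ = _ := by
        rw [integral_div, integral_sub (hint _) (hint _),
          integral_inner_sq_mul_inner_sq hX hsym hX4 he,
          integral_inner_sq_mul_inner_sq hX hsym hX4 he, norm_add_sq_real, norm_sub_sq_real,
          inner_add_right, inner_sub_right]
        ring

end SphericalSymmetry

theorem integral_add_sq_mul_of_indepFun {Ω α : Type*} [MeasurableSpace Ω] {μ : Measure Ω}
    [MeasurableSpace α] {X : Ω → α} {ε : Ω → ℝ} (hX : AEMeasurable X μ) (hε : MemLp ε 2 μ)
    (hindep : IndepFun X ε μ) (hmean : ∫ ω, ε ω ∂μ = 0) {s g : α → ℝ}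
    (hs : Measurable s) (hg : Measurable g)
    (hs2g : Integrable (fun ω => s (X ω) ^ 2 * g (X ω)) μ)
    (hgX : Integrable (fun ω => g (X ω)) μ) :
    ∫ ω, (s (X ω) + ε ω) ^ 2 * g (X ω) ∂μ
      = ∫ ω, s (X ω) ^ 2 * g (X ω) ∂μ + variance ε μ * ∫ ω, g (X ω) ∂μ := by
  have hsgX : AEStronglyMeasurable (fun ω => s (X ω) * g (X ω)) μ :=
    ((hs.mul hg).comp_aemeasurable hX).aestronglyMeasurable
  have hindep₁ : IndepFun ε (fun ω => s (X ω) * g (X ω)) μ :=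
    hindep.symm.comp measurable_id (hs.mul hg)
  have hindep₂ : IndepFun (fun ω => ε ω ^ 2) (fun ω => g (X ω)) μ :=
    hindep.symm.comp (measurable_id.pow_const 2) hg
  have hε2g : Integrable (fun ω => ε ω ^ 2 * g (X ω)) μ :=
    hindep₂.integrable_mul hε.integrable_sq hgX
  -- `|ε s| ≤ s² + ε²` dominates the cross term by the two outer ones: no third moment needed
  have hcross : Integrable (fun ω => ε ω * (s (X ω) * g (X ω))) μ := by
    refine (hs2g.norm.add hε2g.norm).mono' (hε.aestronglyMeasurable.mul hsgX)
      (ae_of_all _ fun ω => ?_)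
    have hes : |ε ω| * |s (X ω)| ≤ s (X ω) ^ 2 + ε ω ^ 2 := by
      nlinarith [sq_nonneg (|ε ω| - |s (X ω)|), sq_abs (ε ω), sq_abs (s (X ω))]
    simp only [Pi.add_apply, norm_mul, norm_pow, Real.norm_eq_abs, sq_abs, ← mul_assoc,
      ← add_mul]
    exact mul_le_mul_of_nonneg_right hes (abs_nonneg _)
  calc ∫ ω, (s (X ω) + ε ω) ^ 2 * g (X ω) ∂μ
      = ∫ ω, s (X ω) ^ 2 * g (X ω) + 2 * (ε ω * (s (X ω) * g (X ω)))
          + ε ω ^ 2 * g (X ω) ∂μ := by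
        congr 1
        funext ω
        ring
    _ = ∫ ω, s (X ω) ^ 2 * g (X ω) ∂μ + 2 * ((∫ ω, ε ω ∂μ) * ∫ ω, s (X ω) * g (X ω) ∂μ)
          + (∫ ω, ε ω ^ 2 ∂μ) * ∫ ω, g (X ω) ∂μ := by
        rw [integral_add (by fun_prop) hε2g, integral_add hs2g (hcross.const_mul 2),
          integral_const_mul,
          hindep₁.integral_fun_mul_eq_mul_integral hε.aestronglyMeasurable hsgX,
          hindep₂.integral_fun_mul_eq_mul_integral (hε.aestronglyMeasurable.pow 2)
            hgX.aestronglyMeasurable]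
    _ = _ := by
        rw [hmean, variance_of_integral_eq_zero hε.aestronglyMeasurable.aemeasurable hmean]
        ring

/-- Fourth-moment identity of the Method of Moments: for a spherically
symmetric, isotropic random vector `x` and independent centered noise `ε`,
with `y = ⟨u,x⟩ + ε`, one has
`E[y² x xᵀ] = κ u uᵀ + (Var(ε) + γ‖u‖²) I_d`. -/
theorem moment_identity {Ω : Type*} [MeasurableSpace Ω]
    (μ : Measure Ω) [IsProbabilityMeasure μ] {d : ℕ} (hd : 2 ≤ d)
    (x : Ω → EuclideanSpace ℝ (Fin d)) (ε : Ω → ℝ)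
    (u : EuclideanSpace ℝ (Fin d))
    (hx : AEMeasurable x μ) (hε : MemLp ε 2 μ)
    (hmom : Integrable (fun ω => ‖x ω‖ ^ 4) μ)
    (hsym : ∀ Q : EuclideanSpace ℝ (Fin d) ≃ₗᵢ[ℝ] EuclideanSpace ℝ (Fin d),
      Measure.map (fun ω => Q (x ω)) μ = Measure.map x μ)
    (hindep : ProbabilityTheory.IndepFun x ε μ)
    (hmean : ∫ ω, ε ω ∂μ = 0)
    (hiso : ∀ i : Fin d, ∫ ω, (x ω i) ^ 2 ∂μ = 1)
    (γ κ : ℝ)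
    (hγ : γ = ∫ ω, (x ω ⟨0, by omega⟩) ^ 2 * (x ω ⟨1, by omega⟩) ^ 2 ∂μ)
    (hκ : κ = (∫ ω, (x ω ⟨0, by omega⟩) ^ 4 ∂μ) - γ)
    (y : Ω → ℝ) (hy : ∀ ω, y ω = (inner ℝ u (x ω) : ℝ) + ε ω) :
    (Matrix.of fun i j : Fin d => ∫ ω, (y ω) ^ 2 * (x ω i) * (x ω j) ∂μ)
      = κ • (Matrix.of fun i j : Fin d => u i * u j)
        + (ProbabilityTheory.variance ε μ + γ * ‖u‖ ^ 2) • (1 : Matrix (Fin d) (Fin d) ℝ) := by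
  set b := EuclideanSpace.basisFun (Fin d) ℝ
  have hcoord (v : EuclideanSpace ℝ (Fin d)) (i : Fin d) : v i = ⟪b i, v⟫ :=
    (EuclideanSpace.basisFun_inner _ _ v i).symm
  simp only [hcoord] at hiso hγ hκ
  have hb₀ : ‖b ⟨0, by omega⟩‖ = 1 := b.norm_eq_one _
  have hx2 := integrable_norm_pow_of_le hx.aestronglyMeasurable (by norm_num : 2 ≤ 4) hmom
  have hγ' : γ = (∫ ω, ⟪b ⟨0, by omega⟩, x ω⟫ ^ 4 ∂μ) / 3 := by
    rw [hγ, integral_inner_sq_mul_inner_sq hx hsym hmom hb₀, b.inner_eq_ite, b.norm_eq_one,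
      b.norm_eq_one]
    simp
  ext i j
  rw [Matrix.add_apply, Matrix.smul_apply, Matrix.smul_apply, Matrix.of_apply, Matrix.of_apply,
    Matrix.one_apply, smul_eq_mul, smul_eq_mul]
  calc ∫ ω, y ω ^ 2 * x ω i * x ω j ∂μ
      = ∫ ω, (⟪u, x ω⟫ + ε ω) ^ 2 * (⟪b i, x ω⟫ * ⟪b j, x ω⟫) ∂μ := by
        simp only [hy, hcoord (x _), mul_assoc]
    _ = ∫ ω, ⟪u, x ω⟫ ^ 2 * (⟪b i, x ω⟫ * ⟪b j, x ω⟫) ∂μ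
          + variance ε μ * ∫ ω, ⟪b i, x ω⟫ * ⟪b j, x ω⟫ ∂μ :=
        integral_add_sq_mul_of_indepFun (s := fun v => ⟪u, v⟫)
          (g := fun v => ⟪b i, v⟫ * ⟪b j, v⟫) hx hε hindep hmean (by fun_prop) (by fun_prop)
          ((integrable_inner_mul_inner_mul_inner_mul_inner hx hmom u u (b i) (b j)).congr
            (ae_of_all _ fun ω => by ring))
          (integrable_inner_mul_inner hx hx2 (b i) (b j))
    _ = _ := by
        rw [integral_inner_sq_mul_inner_mul_inner hx hsym hmom hb₀,
          integral_inner_mul_inner hx hsym hx2 hb₀, hiso, hκ, hγ', b.inner_eq_ite,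
          EuclideanSpace.inner_basisFun_real, EuclideanSpace.inner_basisFun_real]
        split_ifs <;> ring
end

section
/- Let M* ∈ ℝ^{d×T} have rank r with M* = B α where B ∈ ℝ^{d×r} has orthonormal columns, let M̂ ∈ ℝ^{d×T}, let M̃ = B̃ α̃ be a best rank-r Frobenius approximation of M̂ with B̃ᵀB̃ = I_r, and set ν = r · λ_r(M* M*ᵀ / T). Then sin²θ(B, B̃) ≤ 4 r ‖M̂ − M*‖_F² / (T ν). -/
open Matrix MeasureTheory

noncomputable def nuclearNorm {d T : ℕ} (A : Matrix (Fin d) (Fin T) ℝ) : ℝ :=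
  ∑ i, Real.sqrt ((Matrix.isHermitian_conjTranspose_mul_self A).eigenvalues i)

noncomputable def frobNorm {d T : ℕ} (A : Matrix (Fin d) (Fin T) ℝ) : ℝ :=
  Real.sqrt (∑ i, ∑ j, (A i j) ^ 2)

noncomputable def opNorm {m n : ℕ} (A : Matrix (Fin m) (Fin n) ℝ) : ℝ :=
  ‖LinearMap.toContinuousLinearMap (Matrix.toEuclideanLin A)‖

noncomputable def minEig {n : ℕ} (A : Matrix (Fin n) (Fin n) ℝ) (hA : A.IsHermitian) : ℝ :=
  ⨅ i, hA.eigenvalues i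

noncomputable def colNorm {d T : ℕ} (A : Matrix (Fin d) (Fin T) ℝ) (t : Fin T) : ℝ :=
  Real.sqrt (∑ i, (A i t) ^ 2)

/-- `sin θ(B, B̃)`: sine of the largest principal angle between column spaces,
equal to the operator norm of `(I - B̃ B̃ᵀ) B`. -/
noncomputable def sinTheta {d r : ℕ} (B Bt : Matrix (Fin d) (Fin r) ℝ) : ℝ :=
  opNorm ((1 - Bt * Btᵀ) * B)

/-! Write `P = B̃ B̃ᵀ` and `C = (I - P) B`, so that `sin θ = ‖C‖_op ≤ ‖C‖_F`. Since `(I - P) B̃ = 0`,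
`C α = (I - P)(M* - M̃)`, hence `λ_r(α αᵀ) ‖C‖_F² ≤ ‖C α‖_F² ≤ ‖M* - M̃‖_F²`, the first step
because `α αᵀ - λ_r I` is positive semidefinite and the second because `I - P` is an orthogonal
projection. As `M*` has rank `r`, optimality of `M̃` and the triangle inequality give
`‖M* - M̃‖_F ≤ 2 ‖M̂ - M*‖_F`. Finally `α` has full row rank `r`, so `λ_r(α αᵀ) > 0`, and
`T ν = r λ_r(α αᵀ)`. -/

section FrobeniusNorm

variable {m n k : ℕ}

lemma frobNorm_nonneg (A : Matrix (Fin m) (Fin n) ℝ) : 0 ≤ frobNorm A :=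
  Real.sqrt_nonneg _

attribute [local instance] Matrix.frobeniusSeminormedAddCommGroup in
lemma frobNorm_eq_norm (A : Matrix (Fin m) (Fin n) ℝ) : frobNorm A = ‖A‖ := by
  simp only [frobNorm, Matrix.frobenius_norm_def, Real.norm_eq_abs, sq_abs, Real.sqrt_eq_rpow,
    Real.rpow_two]

lemma frobNorm_sq_eq_trace_mul_transpose (A : Matrix (Fin m) (Fin n) ℝ) :
    frobNorm A ^ 2 = (A * Aᵀ).trace := by
  rw [frobNorm, Real.sq_sqrt (by positivity)]
  simp [Matrix.trace, Matrix.mul_apply, sq]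

lemma frobNorm_sq_eq_trace_transpose_mul (A : Matrix (Fin m) (Fin n) ℝ) :
    frobNorm A ^ 2 = (Aᵀ * A).trace := by
  rw [frobNorm_sq_eq_trace_mul_transpose, Matrix.trace_mul_comm]

attribute [local instance] Matrix.frobeniusSeminormedAddCommGroup in
lemma opNorm_le_frobNorm (A : Matrix (Fin m) (Fin n) ℝ) : opNorm A ≤ frobNorm A := by
  refine ContinuousLinearMap.opNorm_le_bound _ (frobNorm_nonneg A) fun x => ?_
  calc ‖_‖ = ‖Matrix.replicateCol (Fin 1) (A *ᵥ WithLp.ofLp x)‖ :=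
        (Matrix.frobenius_norm_replicateCol _).symm
    _ ≤ ‖A‖ * ‖Matrix.replicateCol (Fin 1) (WithLp.ofLp x)‖ := by
        rw [Matrix.replicateCol_mulVec]
        exact Matrix.frobenius_norm_mul _ _
    _ = frobNorm A * ‖x‖ := by
        rw [frobNorm_eq_norm]
        exact congrArg (‖A‖ * ·) (Matrix.frobenius_norm_replicateCol _)

attribute [local instance] Matrix.frobeniusSeminormedAddCommGroup in
lemma frobNorm_sub_le_two_mul_of_le {X Y Z : Matrix (Fin m) (Fin n) ℝ}
    (h : frobNorm (Z - X) ≤ frobNorm (Y - X)) : frobNorm (Y - Z) ≤ 2 * frobNorm (X - Y) := by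
  simp only [frobNorm_eq_norm] at h ⊢
  calc ‖Y - Z‖ ≤ ‖Y - X‖ + ‖X - Z‖ := norm_sub_le_norm_sub_add_norm_sub Y X Z
    _ = ‖X - Y‖ + ‖Z - X‖ := by rw [norm_sub_rev Y X, norm_sub_rev X Z]
    _ ≤ 2 * ‖X - Y‖ := by rw [norm_sub_rev Y X] at h; linarith

lemma mul_frobNorm_sq_le_frobNorm_mul_sq {c : ℝ} {E : Matrix (Fin n) (Fin k) ℝ}
    (hE : (E * Eᵀ - c • 1).PosSemidef) (C : Matrix (Fin m) (Fin n) ℝ) :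
    c * frobNorm C ^ 2 ≤ frobNorm (C * E) ^ 2 := by
  have h := (hE.mul_mul_conjTranspose_same C).trace_nonneg
  rw [Matrix.conjTranspose_eq_transpose_of_trivial, Matrix.mul_sub, Matrix.sub_mul,
    Matrix.trace_sub, Matrix.mul_smul, Matrix.smul_mul, Matrix.mul_one, Matrix.trace_smul,
    sub_nonneg] at h
  rwa [frobNorm_sq_eq_trace_mul_transpose, frobNorm_sq_eq_trace_mul_transpose,
    Matrix.transpose_mul, ← Matrix.mul_assoc, Matrix.mul_assoc C]

lemma frobNorm_sq_orthCompl_mul {U : Matrix (Fin m) (Fin n) ℝ} (hU : Uᵀ * U = 1)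
    (X : Matrix (Fin m) (Fin k) ℝ) :
    frobNorm ((1 - U * Uᵀ) * X) ^ 2 = frobNorm X ^ 2 - frobNorm (Uᵀ * X) ^ 2 := by
  have hQ : (1 - U * Uᵀ)ᵀ * (1 - U * Uᵀ) = 1 - U * Uᵀ := by
    simp only [Matrix.transpose_sub, Matrix.transpose_one, Matrix.transpose_mul,
      Matrix.transpose_transpose, Matrix.mul_sub, Matrix.sub_mul, Matrix.mul_one, Matrix.one_mul,
      Matrix.mul_assoc, ← Matrix.mul_assoc Uᵀ U, hU]
    abel
  have h : ((1 - U * Uᵀ) * X)ᵀ * ((1 - U * Uᵀ) * X) = Xᵀ * X - (Uᵀ * X)ᵀ * (Uᵀ * X) := by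
    rw [Matrix.transpose_mul, Matrix.mul_assoc, ← Matrix.mul_assoc _ (1 - U * Uᵀ), hQ]
    simp only [Matrix.transpose_mul, Matrix.transpose_transpose, Matrix.sub_mul,
      Matrix.mul_sub, Matrix.one_mul, Matrix.mul_assoc]
  simp only [frobNorm_sq_eq_trace_transpose_mul, h, Matrix.trace_sub]

lemma frobNorm_orthCompl_mul_le {U : Matrix (Fin m) (Fin n) ℝ} (hU : Uᵀ * U = 1)
    (X : Matrix (Fin m) (Fin k) ℝ) : frobNorm ((1 - U * Uᵀ) * X) ≤ frobNorm X := by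
  refine (pow_le_pow_iff_left₀ (frobNorm_nonneg _) (frobNorm_nonneg X) two_ne_zero).mp ?_
  rw [frobNorm_sq_orthCompl_mul hU]
  exact sub_le_self _ (sq_nonneg _)

end FrobeniusNorm

section MinEigenvalue

lemma Matrix.IsHermitian.posSemidef_sub_smul_one {n : Type*} [Fintype n] [DecidableEq n]
    {A : Matrix n n ℝ} (hA : A.IsHermitian) {c : ℝ} (hc : ∀ i, c ≤ hA.eigenvalues i) :
    (A - c • 1).PosSemidef := by
  open scoped MatrixOrder in
  rw [← Matrix.nonneg_iff_posSemidef, sub_nonneg, ← Algebra.algebraMap_eq_smul_one,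
    algebraMap_le_iff_le_spectrum (a := A) hA, hA.spectrum_real_eq_range_eigenvalues]
  rintro _ ⟨i, rfl⟩
  exact hc i

lemma Matrix.IsHermitian.eigenvalues_ne_zero_of_rank_eq {n : Type*} [Fintype n] [DecidableEq n]
    {A : Matrix n n ℝ} (hA : A.IsHermitian) (hrank : A.rank = Fintype.card n) (i : n) :
    hA.eigenvalues i ≠ 0 := by
  intro hi
  have hlt := Fintype.card_subtype_lt (p := fun j => hA.eigenvalues j ≠ 0) (not_not.mpr hi)
  rw [← hA.rank_eq_card_non_zero_eigs, hrank] at hlt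
  exact lt_irrefl _ hlt

variable {n : ℕ}

lemma minEig_le_eigenvalues {A : Matrix (Fin n) (Fin n) ℝ} (hA : A.IsHermitian) (i : Fin n) :
    minEig A hA ≤ hA.eigenvalues i :=
  ciInf_le (Set.finite_range _).bddBelow i

lemma posSemidef_sub_minEig_smul_one {A : Matrix (Fin n) (Fin n) ℝ} (hA : A.IsHermitian) :
    (A - minEig A hA • 1).PosSemidef :=
  hA.posSemidef_sub_smul_one (minEig_le_eigenvalues hA)

lemma minEig_pos_of_rank_eq {A : Matrix (Fin n) (Fin n) ℝ} (hA : A.PosSemidef) (hn : 0 < n)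
    (hrank : A.rank = n) : 0 < minEig A hA.1 := by
  have : Nonempty (Fin n) := ⟨⟨0, hn⟩⟩
  obtain ⟨i, hi⟩ := exists_eq_ciInf_of_finite (f := hA.1.eigenvalues)
  rw [minEig, ← hi]
  exact (hA.eigenvalues_nonneg i).lt_of_ne'
    (hA.1.eigenvalues_ne_zero_of_rank_eq (by rwa [Fintype.card_fin]) i)

end MinEigenvalue

lemma sinTheta_sq_mul_le {d r T : ℕ} {B Bt : Matrix (Fin d) (Fin r) ℝ}
    {α αt : Matrix (Fin r) (Fin T) ℝ} {c : ℝ} (hBt : Btᵀ * Bt = 1) (hc : 0 ≤ c)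
    (hα : (α * αᵀ - c • 1).PosSemidef) :
    sinTheta B Bt ^ 2 * c ≤ frobNorm (B * α - Bt * αt) ^ 2 := by
  set C := (1 - Bt * Btᵀ) * B
  have hCα : C * α = (1 - Bt * Btᵀ) * (B * α - Bt * αt) := by
    have hBt_ker : (1 - Bt * Btᵀ) * Bt = 0 := by
      rw [Matrix.sub_mul, Matrix.one_mul, Matrix.mul_assoc, hBt, Matrix.mul_one, sub_self]
    rw [Matrix.mul_sub, ← Matrix.mul_assoc _ Bt, hBt_ker, Matrix.zero_mul, sub_zero,
      Matrix.mul_assoc]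
  calc sinTheta B Bt ^ 2 * c ≤ frobNorm C ^ 2 * c := by
        gcongr
        · exact norm_nonneg _
        · exact opNorm_le_frobNorm C
    _ = c * frobNorm C ^ 2 := mul_comm _ _
    _ ≤ frobNorm (C * α) ^ 2 := mul_frobNorm_sq_le_frobNorm_mul_sq hα C
    _ ≤ frobNorm (B * α - Bt * αt) ^ 2 := by
        rw [hCα]
        gcongr
        · exact frobNorm_nonneg _
        · exact frobNorm_orthCompl_mul_le hBt _

lemma sinTheta_of_fin_zero {d : ℕ} (B Bt : Matrix (Fin d) (Fin 0) ℝ) : sinTheta B Bt = 0 := by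
  rw [sinTheta, Subsingleton.elim ((1 - Bt * Btᵀ) * B) 0]
  simp [opNorm]

lemma Matrix.rank_right_eq_of_rank_mul_eq {d r T : ℕ} {B : Matrix (Fin d) (Fin r) ℝ}
    {α : Matrix (Fin r) (Fin T) ℝ} (h : (B * α).rank = r) : α.rank = r :=
  le_antisymm (α.rank_le_card_height.trans_eq (Fintype.card_fin r))
    (h.symm.le.trans (Matrix.rank_mul_le_right B α))

theorem meta_subspace_angle_bound {d r T : ℕ}
    (Mstar Mhat Mtil : Matrix (Fin d) (Fin T) ℝ)
    (B Bt : Matrix (Fin d) (Fin r) ℝ) (α αt : Matrix (Fin r) (Fin T) ℝ)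
    (hrank : Mstar.rank = r)
    (hM : Mstar = B * α)
    (hMt : Mtil = Bt * αt) (hBt : Btᵀ * Bt = 1)
    (hbest : ∀ L : Matrix (Fin d) (Fin T) ℝ, L.rank ≤ r →
      frobNorm (Mtil - Mhat) ≤ frobNorm (L - Mhat))
    (ν : ℝ)
    (hν : ν = r * (minEig (α * αᵀ)
      (by simpa using Matrix.isHermitian_mul_conjTranspose_self α) / T)) :
    (sinTheta B Bt) ^ 2 ≤ 4 * r * (frobNorm (Mhat - Mstar)) ^ 2 / (T * ν) := by
  rcases Nat.eq_zero_or_pos r with rfl | hr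
  · simp [sinTheta_of_fin_zero]
  have hαrank : α.rank = r := Matrix.rank_right_eq_of_rank_mul_eq (hM ▸ hrank)
  have hαα : (α * αᵀ).PosSemidef := by simpa using Matrix.posSemidef_self_mul_conjTranspose α
  set lam := minEig (α * αᵀ) hαα.1
  have hlam : 0 < lam := minEig_pos_of_rank_eq hαα hr (by rwa [Matrix.rank_self_mul_transpose])
  have hT : (T : ℝ) ≠ 0 :=
    Nat.cast_ne_zero.mpr (hr.trans_le (hαrank ▸ α.rank_le_width)).ne'
  have hkey : sinTheta B Bt ^ 2 * lam ≤ 4 * frobNorm (Mhat - Mstar) ^ 2 := calc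
    sinTheta B Bt ^ 2 * lam ≤ frobNorm (Mstar - Mtil) ^ 2 := by
      rw [hM, hMt]
      exact sinTheta_sq_mul_le hBt hlam.le (posSemidef_sub_minEig_smul_one hαα.1)
    _ ≤ (2 * frobNorm (Mhat - Mstar)) ^ 2 := by
      gcongr
      · exact frobNorm_nonneg _
      · exact frobNorm_sub_le_two_mul_of_le (hbest Mstar hrank.le)
    _ = 4 * frobNorm (Mhat - Mstar) ^ 2 := by ring
  have hTν : T * ν = r * lam := by rw [hν]; field_simp
  rw [hTν, le_div_iff₀ (by positivity)]
  nlinarith [hkey, (Nat.cast_pos.mpr hr : (0 : ℝ) < r)]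
end
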